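/- Let K_1, …, K_{r−1} ∈ ℝ^{n×n} be symmetric positive semi-definite matrices and K_r = I_n, and for ψ ∈ ℝ^r with ψ_j ≥ 0 for j < r and ψ_r > 0 let Σ(ψ) = Σ_{j=1}^{r} ψ_j K_j (which is positive definite). Set A_j(ψ) = Σ(ψ)^{-1/2} K_j Σ(ψ)^{-1/2} for j ∈ {1, …, r}, and let I(ψ) ∈ ℝ^{r×r} have entries I(ψ)_{ij} = tr(A_i(ψ)A_j(ψ))/2. Then I(ψ) is positive definite if and only if K_1, …, K_r are linearly independent in the vector space of n×n matrices. -/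

import Mathlib

open Matrix

open Classical in
/-- The positive semidefinite square root of a matrix (junk value `0` off the
positive semidefinite matrices). -/
noncomputable def msqrt {ι : Type*} [Fintype ι] [DecidableEq ι] (M : Matrix ι ι ℝ) :
    Matrix ι ι ℝ :=
  if h : M.PosSemidef then
    h.1.eigenvectorUnitary.1 * diagonal ((RCLike.ofReal : ℝ → ℝ) ∘ (√·) ∘ h.1.eigenvalues) *
      (star h.1.eigenvectorUnitary : Matrix ι ι ℝ)
  else 0

/-- The full family of variance-component matrices: `K_1, …, K_{r−1}` given, and
`K_r = I_n` (the last index). -/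
noncomputable def Kfull {n m : ℕ} (K : Fin m → Matrix (Fin n) (Fin n) ℝ)
    (j : Fin (m + 1)) : Matrix (Fin n) (Fin n) ℝ :=
  Fin.lastCases 1 K j

/-- `Σ(ψ) = ∑_j ψ_j K_j` in the variance components model. -/
noncomputable def SigmaVC {n m : ℕ} (K : Fin m → Matrix (Fin n) (Fin n) ℝ)
    (ψ : Fin (m + 1) → ℝ) : Matrix (Fin n) (Fin n) ℝ :=
  ∑ j, ψ j • Kfull K j

/-- `A_j(ψ) = Σ(ψ)^{-1/2} K_j Σ(ψ)^{-1/2}`. -/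
noncomputable def AjVC {n m : ℕ} (K : Fin m → Matrix (Fin n) (Fin n) ℝ)
    (ψ : Fin (m + 1) → ℝ) (j : Fin (m + 1)) : Matrix (Fin n) (Fin n) ℝ :=
  (msqrt (SigmaVC K ψ))⁻¹ * Kfull K j * (msqrt (SigmaVC K ψ))⁻¹

/-- The Fisher information matrix `I(ψ)_{ij} = tr(A_i(ψ) A_j(ψ))/2`. -/
noncomputable def infoVC {n m : ℕ} (K : Fin m → Matrix (Fin n) (Fin n) ℝ)
    (ψ : Fin (m + 1) → ℝ) : Matrix (Fin (m + 1)) (Fin (m + 1)) ℝ :=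
  Matrix.of fun i j => (AjVC K ψ i * AjVC K ψ j).trace / 2

/-! With `S = Σ(ψ)^{-1/2}` symmetric and invertible, each `A_j = S K_j S` is symmetric, so
`tr (A_i A_j)` is the Frobenius inner product of `A_i` and `A_j` and `I(ψ)` is half their Gram
matrix. A Gram matrix is positive definite exactly when the family is linearly independent, and
`X ↦ S X S` is injective, so it preserves and reflects linear independence. -/

open scoped MatrixOrder ComplexOrder

namespace Matrix

variable {𝕜 ι n : Type*} [RCLike 𝕜]

theorem posDef_smul_iff {M : Matrix n n 𝕜} {a : ℝ} (ha : 0 < a) :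
    (a • M).PosDef ↔ M.PosDef :=
  ⟨fun h => by simpa [smul_smul, ha.ne'] using h.smul (inv_pos.2 ha), fun h => h.smul ha⟩

variable [Fintype n]

theorem posDef_trace_mul_iff_linearIndependent [Fintype ι] [DecidableEq n]
    {A : ι → Matrix n n 𝕜} (hA : ∀ i, (A i).IsHermitian) :
    (of fun i j => (A i * A j).trace).PosDef ↔ LinearIndependent 𝕜 A := by
  let _ := toMatrixNormedAddCommGroup (1 : Matrix n n 𝕜) PosDef.one
  let _ := toMatrixInnerProductSpace (1 : Matrix n n 𝕜) PosSemidef.one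
  convert posDef_gram_iff_linearIndependent (𝕜 := 𝕜) (v := A) using 2
  ext i j
  rw [of_apply, gram_apply]
  change _ = (A j * 1 * (A i)ᴴ).trace
  rw [mul_one, (hA i).eq, trace_mul_comm]

theorem linearIndependent_mul_mul_iff {R : Type*} [CommRing R] [DecidableEq n]
    {S T : Matrix n n R} (hS : IsUnit S) (hT : IsUnit T) (A : ι → Matrix n n R) :
    LinearIndependent R (fun i => S * A i * T) ↔ LinearIndependent R A :=
  ((LinearMap.mulRight R T).comp (LinearMap.mulLeft R S)).linearIndependent_iff_of_injOn
    (hT.mul_left_injective.comp hS.mul_right_injective).injOn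

end Matrix

section SquareRoot

variable {ι : Type*} [Fintype ι] [DecidableEq ι] {M : Matrix ι ι ℝ}

theorem msqrt_eq_cfcSqrt (hM : M.PosSemidef) : msqrt M = CFC.sqrt M := by
  rw [msqrt, dif_pos hM, CFC.sqrt_eq_cfc, cfc_nnreal_eq_real _ M, hM.1.cfc_eq, IsHermitian.cfc,
    Unitary.conjStarAlgAut_apply]
  congr
  ext x
  rcases le_total x 0 with h | h <;> simp [h, Real.sqrt_eq_zero'.2]

theorem isHermitian_msqrt (hM : M.PosSemidef) : (msqrt M).IsHermitian := by
  rw [msqrt_eq_cfcSqrt hM]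
  exact (CFC.sqrt_nonneg M).posSemidef.isHermitian

theorem isUnit_msqrt (hM : M.PosDef) : IsUnit (msqrt M) := by
  rw [msqrt_eq_cfcSqrt hM.posSemidef]
  exact CFC.isUnit_sqrt_iff_isStrictlyPositive.2 hM.isStrictlyPositive

end SquareRoot

section VarianceComponents

variable {n m : ℕ} {K : Fin m → Matrix (Fin n) (Fin n) ℝ}

theorem isHermitian_Kfull (hK : ∀ j, (K j).IsHermitian) (j : Fin (m + 1)) :
    (Kfull K j).IsHermitian := by
  induction j using Fin.lastCases with
  | last => simp [Kfull]
  | cast i => simpa [Kfull] using hK i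

theorem posDef_SigmaVC (hK : ∀ j, (K j).PosSemidef) {ψ : Fin (m + 1) → ℝ}
    (hψ : ∀ j : Fin m, 0 ≤ ψ j.castSucc) (hψr : 0 < ψ (Fin.last m)) :
    (SigmaVC K ψ).PosDef := by
  rw [SigmaVC, Fin.sum_univ_castSucc]
  simp only [Kfull, Fin.lastCases_castSucc, Fin.lastCases_last]
  exact PosDef.posSemidef_add (posSemidef_sum _ fun j _ => (hK j).smul (hψ j))
    (PosDef.one.smul hψr)

theorem infoVC_eq_smul (ψ : Fin (m + 1) → ℝ) :
    infoVC K ψ = (2⁻¹ : ℝ) • of fun i j => (AjVC K ψ i * AjVC K ψ j).trace := by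
  ext i j
  simp [infoVC, div_eq_inv_mul]

end VarianceComponents

/-- In the variance components model with `K_1, …, K_{r−1}` positive semi-definite,
`K_r = I_n`, `ψ_j ≥ 0` for `j < r` and `ψ_r > 0`, the Fisher information `I(ψ)` is
positive definite if and only if `K_1, …, K_r` are linearly independent. -/
theorem stmt9 {n m : ℕ} (K : Fin m → Matrix (Fin n) (Fin n) ℝ)
    (hK : ∀ j, (K j).PosSemidef)
    (ψ : Fin (m + 1) → ℝ) (hψ : ∀ j : Fin m, 0 ≤ ψ j.castSucc)
    (hψr : 0 < ψ (Fin.last m)) :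
    (infoVC K ψ).PosDef ↔ LinearIndependent ℝ (Kfull K) := by
  have hSigma := posDef_SigmaVC hK hψ hψr
  set S := (msqrt (SigmaVC K ψ))⁻¹
  have hS : S.IsHermitian := (isHermitian_msqrt hSigma.posSemidef).inv
  have hSunit : IsUnit S := isUnit_nonsing_inv_iff.2 (isUnit_msqrt hSigma)
  have hA (j : Fin (m + 1)) : (AjVC K ψ j).IsHermitian := by
    have h := isHermitian_conjTranspose_mul_mul S (isHermitian_Kfull (fun j => (hK j).1) j)
    rwa [hS.eq] at h
  rw [infoVC_eq_smul, posDef_smul_iff (by norm_num),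
    posDef_trace_mul_iff_linearIndependent hA]
  exact linearIndependent_mul_mul_iff hSunit hSunit (Kfull K)
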